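/- Let κ(x,y) = c/(|x−y|^Δ + c) with c > 0 and Δ > 1, Φ its feature map with ‖Φ(x)−Φ(x')‖² = 2−2κ(x,x'), and let 𝒞 = {Φ(x) : x ∈ [0,1]} with projection Proj onto 𝒞 and Φ⁻¹(Proj(z)) the latent preimage. If x ∈ [0,1], z = Φ(x), and z' satisfies ‖z' − z‖ ≤ g with 2g < √2, then |x − Φ⁻¹(Proj(z'))| ≤ (c/2)^{1/Δ} · (2g)^{2/Δ} · (1 − 2g²)^{−1/Δ}. -/
import Mathlib


open scoped RealInnerProductSpace

theorem stmt17 {H : Type*} [NormedAddCommGroup H] [InnerProductSpace ℝ H]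
    (c Δ : ℝ) (hc : 0 < c) (hΔ : 1 < Δ) (Φ : ℝ → H)
    (hΦ : ∀ x ∈ Set.Icc (0:ℝ) 1, ∀ x' ∈ Set.Icc (0:ℝ) 1,
      ⟪Φ x, Φ x'⟫ = c / (|x - x'| ^ Δ + c))
    (x : ℝ) (hx : x ∈ Set.Icc (0:ℝ) 1)
    (z' : H) (g : ℝ) (hg0 : 0 ≤ g) (hgz : ‖z' - Φ x‖ ≤ g)
    (hg2 : 2 * g < Real.sqrt 2)
    (p : H) (hp : p ∈ Φ '' Set.Icc (0:ℝ) 1)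
    (hproj : ∀ q ∈ Φ '' Set.Icc (0:ℝ) 1, ‖z' - p‖ ≤ ‖z' - q‖)
    (xinv : ℝ) (hxinv : xinv ∈ Set.Icc (0:ℝ) 1) (hΦxinv : Φ xinv = p) :
    |x - xinv| ≤ (c / 2) ^ (1 / Δ) * (2 * g) ^ (2 / Δ) * (1 - 2 * g ^ 2) ^ (-(1 / Δ)) := by
  have hΔ0 : 0 < Δ := by linarith
  set t := |x - xinv| ^ Δ with ht
  have htnn : 0 ≤ t := Real.rpow_nonneg (abs_nonneg _) _
  have hzp : ‖z' - p‖ ≤ g := le_trans (hproj (Φ x) ⟨x, hx, rfl⟩) hgz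
  have hdist : ‖Φ x - Φ xinv‖ ≤ 2 * g := by
    rw [hΦxinv]
    calc ‖Φ x - p‖ ≤ ‖Φ x - z'‖ + ‖z' - p‖ := by
          simpa [dist_eq_norm] using dist_triangle (Φ x) z' p
      _ ≤ g + g := by rw [norm_sub_rev]; exact add_le_add hgz hzp
      _ = 2 * g := by ring
  have hself : ∀ y ∈ Set.Icc (0:ℝ) 1, ‖Φ y‖ ^ 2 = 1 := by
    intro y hy
    have h := hΦ y hy y hy
    rw [sub_self, abs_zero, Real.zero_rpow hΔ0.ne', zero_add, div_self hc.ne'] at h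
    rw [← real_inner_self_eq_norm_sq, h]
  have hnormsq : ‖Φ x - Φ xinv‖ ^ 2 = 2 - 2 * (c / (t + c)) := by
    rw [norm_sub_sq_real, hself x hx, hself xinv hxinv, hΦ x hx xinv hxinv]
    ring
  have h2 : ‖Φ x - Φ xinv‖ ^ 2 ≤ (2 * g) ^ 2 :=
    pow_le_pow_left₀ (norm_nonneg _) hdist 2
  have h1 : 0 < 1 - 2 * g ^ 2 := by
    have hs : (2 * g) ^ 2 < (Real.sqrt 2) ^ 2 :=
      pow_lt_pow_left₀ hg2 (by linarith) (by norm_num)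
    rw [Real.sq_sqrt (by norm_num : (0:ℝ) ≤ 2)] at hs
    nlinarith
  have htc : 0 < t + c := by linarith
  have key : t * (1 - 2 * g ^ 2) ≤ 2 * g ^ 2 * c := by
    rw [hnormsq] at h2
    have h3 : (2 - 2 * (c / (t + c))) * (t + c) ≤ (2 * g) ^ 2 * (t + c) :=
      mul_le_mul_of_nonneg_right h2 htc.le
    have h4 : c / (t + c) * (t + c) = c := div_mul_cancel₀ _ htc.ne'
    nlinarith
  have tle : t ≤ 2 * g ^ 2 * c / (1 - 2 * g ^ 2) := (le_div_iff₀ h1).mpr key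
  have habs : |x - xinv| = t ^ (1 / Δ) := by
    show |x - xinv| = (|x - xinv| ^ Δ) ^ (1 / Δ)
    rw [← Real.rpow_mul (abs_nonneg _), mul_one_div, div_self hΔ0.ne', Real.rpow_one]
  have hRHS : (c / 2) ^ (1 / Δ) * (2 * g) ^ (2 / Δ) * (1 - 2 * g ^ 2) ^ (-(1 / Δ))
      = (2 * g ^ 2 * c / (1 - 2 * g ^ 2)) ^ (1 / Δ) := by
    have hg2n : (0:ℝ) ≤ 2 * g := by linarith
    rw [show (2 / Δ) = (2:ℝ) * (1 / Δ) by ring, Real.rpow_mul hg2n,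
      show (2 * g) ^ (2:ℝ) = (2 * g) ^ 2 by
        rw [show ((2:ℝ)) = ((2:ℕ) : ℝ) by norm_num, Real.rpow_natCast],
      Real.rpow_neg h1.le, ← Real.inv_rpow h1.le,
      ← Real.mul_rpow (by positivity) (by positivity),
      ← Real.mul_rpow (by positivity) (by positivity)]
    congr 1
    field_simp
  rw [hRHS, habs]
  exact Real.rpow_le_rpow htnn tle (by positivity)
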